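/- Let V be the free k-module on v₊, v₋ with multiplication m and comultiplication Δ as above. Then the Frobenius relation holds: Δ ∘ m = (m ⊗ id) ∘ (id ⊗ Δ) = (id ⊗ m) ∘ (Δ ⊗ id) as maps V ⊗ V → V ⊗ V. -/

import Mathlib

open TensorProduct

noncomputable section

/-- The free `k`-module on generators `v₊, v₋`, realized as `k × k`. -/
abbrev V (k : Type*) [CommRing k] : Type _ := k × k

variable (k : Type*) [CommRing k]

/-- The generator `v₊`. -/
def vp : V k := (1, 0)

/-- The generator `v₋`. -/
def vm : V k := (0, 1)

/-- The Frobenius multiplication `m : V ⊗ V → V` with `m(v₊⊗v₊)=v₊`,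
`m(v₊⊗v₋)=m(v₋⊗v₊)=v₋`, `m(v₋⊗v₋)=0`. -/
def mV : V k ⊗[k] V k →ₗ[k] V k :=
  TensorProduct.lift (LinearMap.mk₂ k (fun x y => (x.1 * y.1, x.1 * y.2 + x.2 * y.1))
    (by intros; ext <;> simp only [Prod.fst_add, Prod.snd_add, Prod.smul_fst, Prod.smul_snd, smul_eq_mul] <;> ring)
    (by intros; ext <;> simp only [Prod.fst_add, Prod.snd_add, Prod.smul_fst, Prod.smul_snd, smul_eq_mul] <;> ring)
    (by intros; ext <;> simp only [Prod.fst_add, Prod.snd_add, Prod.smul_fst, Prod.smul_snd, smul_eq_mul] <;> ring)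
    (by intros; ext <;> simp only [Prod.fst_add, Prod.snd_add, Prod.smul_fst, Prod.smul_snd, smul_eq_mul] <;> ring))

/-- The Frobenius comultiplication `Δ : V → V ⊗ V`,
`Δ(v₊)=v₊⊗v₋+v₋⊗v₊`, `Δ(v₋)=v₋⊗v₋`. -/
def ΔV : V k →ₗ[k] V k ⊗[k] V k :=
  (LinearMap.fst k k k).smulRight (vp k ⊗ₜ vm k + vm k ⊗ₜ vp k) +
    (LinearMap.snd k k k).smulRight (vm k ⊗ₜ vm k)

/-- The unit `ε : k → V`, `1 ↦ v₊`. -/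
def εV : k →ₗ[k] V k := LinearMap.toSpanSingleton k (V k) (vp k)

/-- The counit `η : V → k`, `v₊ ↦ 0`, `v₋ ↦ 1`. -/
def ηV : V k →ₗ[k] k := LinearMap.snd k k k

/-- The free rank-one `k`-module `W = k{w}`, with `w = 1`. -/
abbrev W (k : Type*) [CommRing k] : Type _ := k

/-- The saddle map `s : W → W ⊗ V`, `w ↦ w ⊗ v₋`. -/
def sW : W k →ₗ[k] W k ⊗[k] V k :=
  LinearMap.toSpanSingleton k (W k ⊗[k] V k) ((1 : k) ⊗ₜ vm k)

/-- The saddle map `t : W ⊗ V → W`, `w⊗v₊ ↦ w`, `w⊗v₋ ↦ 0`. -/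
def tW : W k ⊗[k] V k →ₗ[k] W k :=
  TensorProduct.lift (LinearMap.mk₂ k (fun c x => c * x.1)
    (by intros; ring) (by intros; simp; ring)
    (by intros; simp; ring) (by intros; simp; ring))

/-- The map `Ψ : W → V` closing an arc into a circle, `w ↦ v₋`. -/
def ΨW : W k →ₗ[k] V k := LinearMap.toSpanSingleton k (V k) (vm k)

end

theorem V_tensor_ext {k M : Type*} [CommRing k] [AddCommGroup M] [Module k M]
    {f g : V k ⊗[k] V k →ₗ[k] M}
    (hpp : f (vp k ⊗ₜ vp k) = g (vp k ⊗ₜ vp k)) (hpm : f (vp k ⊗ₜ vm k) = g (vp k ⊗ₜ vm k))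
    (hmp : f (vm k ⊗ₜ vp k) = g (vm k ⊗ₜ vp k)) (hmm : f (vm k ⊗ₜ vm k) = g (vm k ⊗ₜ vm k)) :
    f = g :=
  ((Module.Basis.finTwoProd k).tensorProduct (Module.Basis.finTwoProd k)).ext fun ⟨i, j⟩ => by
    fin_cases i <;> fin_cases j <;> simpa [Module.Basis.tensorProduct_apply, vp, vm]

section BasisValues

variable (k : Type*) [CommRing k]

@[simp] theorem mV_vp_vp : mV k (vp k ⊗ₜ vp k) = vp k := by simp [mV, vp]

@[simp] theorem mV_vp_vm : mV k (vp k ⊗ₜ vm k) = vm k := by simp [mV, vp, vm]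

@[simp] theorem mV_vm_vp : mV k (vm k ⊗ₜ vp k) = vm k := by simp [mV, vp, vm]

@[simp] theorem mV_vm_vm : mV k (vm k ⊗ₜ vm k) = 0 := by simp [mV, vm]

@[simp] theorem ΔV_vp : ΔV k (vp k) = vp k ⊗ₜ vm k + vm k ⊗ₜ vp k := by simp [ΔV, vp]

@[simp] theorem ΔV_vm : ΔV k (vm k) = vm k ⊗ₜ vm k := by simp [ΔV, vm]

end BasisValues

/-- the Frobenius relation
`Δ ∘ m = (m ⊗ id) ∘ (id ⊗ Δ) = (id ⊗ m) ∘ (Δ ⊗ id)` as maps `V ⊗ V → V ⊗ V`. -/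
theorem frobenius_relation (k : Type*) [CommRing k] :
    (ΔV k).comp (mV k) =
        (TensorProduct.map (mV k) LinearMap.id).comp
          ((TensorProduct.assoc k (V k) (V k) (V k)).symm.toLinearMap.comp
            (TensorProduct.map LinearMap.id (ΔV k))) ∧
      (ΔV k).comp (mV k) =
        (TensorProduct.map LinearMap.id (mV k)).comp
          ((TensorProduct.assoc k (V k) (V k) (V k)).toLinearMap.comp
            (TensorProduct.map (ΔV k) LinearMap.id)) := by
  constructor <;> apply V_tensor_ext <;>
    simp [tmul_add, add_tmul]
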